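/- Let f ≥ 1, m ≥ 1, P ≥ 1 be integers with K = f·m ≥ 2 and n = K(K−1)/2, let R̃, Ṽ be symmetric positive definite P×P real matrices, let b_1 > 0 and b ≥ 0, and let L = diag(ℓ_1, …, ℓ_P) with ℓ_i ≥ 0. Set N = I_f ⊗ (b_1 I_m + b 1_m 1_mᵀ), V_1 = b_1 Ṽ, V_2 = (mb + b_1) Ṽ, S_1 = R̃ + V_1, S_2 = R̃ + V_2, T = I_K − (1/K)·1_K 1_Kᵀ, and let 𝒞 be the n×K pairwise-contrast matrix whose rows are e_kᵀ − e_{k'}ᵀ for 1 ≤ k < k' ≤ K. For a symmetric positive definite P×P matrix M define Σ(M) = {T ⊗ (M⁻¹ + R̃)⁻¹ + (N ⊗ Ṽ)⁻¹}⁻¹, Φ_α(M) = tr[Σ(M)(I_K ⊗ L)], Φ_θ(M) = tr[(𝒞 ⊗ I_P)Σ(M)(𝒞ᵀ ⊗ I_P)(I_n ⊗ L)], and Φ^{CBRC}(M) = f(m−1)·tr{(M + S_1⁻¹)⁻¹ S_1⁻¹ V_1 L V_1 S_1⁻¹} + (f−1)·tr{(M + S_2⁻¹)⁻¹ S_2⁻¹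 V_2 L V_2 S_2⁻¹}. Then for any two symmetric positive definite P×P matrices M_1, M_2: Φ_α(M_1) ≤ Φ_α(M_2) if and only if Φ_θ(M_1) ≤ Φ_θ(M_2), if and only if Φ^{CBRC}(M_1) ≤ Φ^{CBRC}(M_2). -/

import Mathlib

noncomputable section
open Matrix Kronecker

/-- The all-ones square matrix. -/
def onesMat (ι : Type*) : Matrix ι ι ℝ := Matrix.of fun _ _ => 1

/-- The centering matrix `T = I_K − (1/K)·1_K 1_Kᵀ`. -/
def Tmat (K : ℕ) : Matrix (Fin K) (Fin K) ℝ := 1 - (K : ℝ)⁻¹ • onesMat (Fin K)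

/-- The pairwise-contrast matrix whose rows, indexed by the pairs `k < k'`,
are the vectors `e_kᵀ − e_{k'}ᵀ`. -/
def Cmat (K : ℕ) : Matrix {p : Fin K × Fin K // p.1 < p.2} (Fin K) ℝ :=
  Matrix.of fun q j => (if j = q.1.1 then (1 : ℝ) else 0) - (if j = q.1.2 then 1 else 0)

/-- Block-diagonal kinship matrix with `f` compound-symmetry blocks
`b1·I_m + b·1_m 1_mᵀ` of size `m`, as a matrix over `Fin (f * m)` via the
canonical identification `Fin f × Fin m ≃ Fin (f * m)`. -/
def Nmat (f m : ℕ) (b1 b : ℝ) : Matrix (Fin (f * m)) (Fin (f * m)) ℝ :=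
  (((1 : Matrix (Fin f) (Fin f) ℝ)
      ⊗ₖ (b1 • (1 : Matrix (Fin m) (Fin m) ℝ) + b • onesMat (Fin m))).submatrix
    finProdFinEquiv.symm finProdFinEquiv.symm)

/-- The MSE matrix `Σ(M) = {T ⊗ (M⁻¹ + R̃)⁻¹ + (N ⊗ Ṽ)⁻¹}⁻¹`. -/
def SigmaMat (f m P : ℕ) (R V : Matrix (Fin P) (Fin P) ℝ) (b1 b : ℝ)
    (M : Matrix (Fin P) (Fin P) ℝ) :
    Matrix (Fin (f * m) × Fin P) (Fin (f * m) × Fin P) ℝ :=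
  (Tmat (f * m) ⊗ₖ (M⁻¹ + R)⁻¹ + (Nmat f m b1 b ⊗ₖ V)⁻¹)⁻¹

/-- Weighted A-criterion for prediction of the genotype effects. -/
def PhiAlpha (f m P : ℕ) (R V L : Matrix (Fin P) (Fin P) ℝ) (b1 b : ℝ)
    (M : Matrix (Fin P) (Fin P) ℝ) : ℝ :=
  trace (SigmaMat f m P R V b1 b M
    * ((1 : Matrix (Fin (f * m)) (Fin (f * m)) ℝ) ⊗ₖ L))

/-- Weighted A-criterion for prediction of the pairwise linear contrasts. -/
def PhiTheta (f m P : ℕ) (R V L : Matrix (Fin P) (Fin P) ℝ) (b1 b : ℝ)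
    (M : Matrix (Fin P) (Fin P) ℝ) : ℝ :=
  trace ((Cmat (f * m) ⊗ₖ (1 : Matrix (Fin P) (Fin P) ℝ))
    * SigmaMat f m P R V b1 b M
    * ((Cmat (f * m))ᵀ ⊗ₖ (1 : Matrix (Fin P) (Fin P) ℝ))
    * ((1 : Matrix {p : Fin (f * m) × Fin (f * m) // p.1 < p.2}
          {p : Fin (f * m) × Fin (f * m) // p.1 < p.2} ℝ) ⊗ₖ L))

/-- The CBRC criterion, with `V_1 = b1·Ṽ`, `V_2 = (m·b + b1)·Ṽ`, `S_i = R̃ + V_i`. -/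
def PhiCBRC (f m P : ℕ) (R V L : Matrix (Fin P) (Fin P) ℝ) (b1 b : ℝ)
    (M : Matrix (Fin P) (Fin P) ℝ) : ℝ :=
  (f : ℝ) * ((m : ℝ) - 1)
      * trace ((M + (R + b1 • V)⁻¹)⁻¹
          * ((R + b1 • V)⁻¹ * (b1 • V) * L * (b1 • V) * (R + b1 • V)⁻¹))
    + ((f : ℝ) - 1)
      * trace ((M + (R + (m * b + b1) • V)⁻¹)⁻¹
          * ((R + (m * b + b1) • V)⁻¹ * ((m * b + b1) • V) * L
              * ((m * b + b1) • V) * (R + (m * b + b1) • V)⁻¹))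

lemma onesMat_mul_onesMat (ι : Type*) [Fintype ι] :
    onesMat ι * onesMat ι = (Fintype.card ι : ℝ) • onesMat ι := by
  ext i j
  simp [onesMat, Matrix.mul_apply, Finset.card_univ]

lemma one_mul_onesMat (ι : Type*) [Fintype ι] [DecidableEq ι] :
    (1 : Matrix ι ι ℝ) * onesMat ι = onesMat ι := by simp

lemma trace_onesMat (ι : Type*) [Fintype ι] :
    trace (onesMat ι) = (Fintype.card ι : ℝ) := by
  simp [onesMat, trace, Matrix.diag, Finset.card_univ]


lemma trace_submatrix_equiv' {n m : Type*} [Fintype n] [Fintype m]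
    (A : Matrix m m ℝ) (e : n ≃ m) : trace (A.submatrix e e) = trace A := by
  simp only [trace, Matrix.diag, Matrix.submatrix_apply]
  exact Fintype.sum_equiv e _ _ (fun i => rfl)

def GmatAux (f m : ℕ) (a b c : ℝ) : Matrix (Fin f × Fin m) (Fin f × Fin m) ℝ :=
  (1 : Matrix (Fin f) (Fin f) ℝ) ⊗ₖ
      (a • (1 : Matrix (Fin m) (Fin m) ℝ) + b • onesMat (Fin m))
    + c • (onesMat (Fin f) ⊗ₖ onesMat (Fin m))

def Gmat (f m : ℕ) (a b c : ℝ) : Matrix (Fin (f * m)) (Fin (f * m)) ℝ :=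
  (GmatAux f m a b c).submatrix finProdFinEquiv.symm finProdFinEquiv.symm

lemma GmatAux_mul (f m : ℕ) (a b c a' b' c' : ℝ) :
    GmatAux f m a b c * GmatAux f m a' b' c' =
      GmatAux f m (a * a') (a * b' + b * a' + m * (b * b'))
        (c * a' + m * (c * b') + a * c' + m * (b * c') + (f * m) * (c * c')) := by
  simp only [GmatAux, Matrix.add_mul, Matrix.mul_add, Matrix.smul_mul, Matrix.mul_smul,
    ← mul_kronecker_mul, Matrix.mul_one, Matrix.one_mul, onesMat_mul_onesMat,
    one_mul_onesMat, Fintype.card_fin, smul_add, Matrix.smul_kronecker,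
    Matrix.kronecker_smul, smul_smul, Matrix.add_kronecker, Matrix.kronecker_add, Matrix.one_kronecker_one]
  module

lemma Gmat_mul (f m : ℕ) (a b c a' b' c' : ℝ) :
    Gmat f m a b c * Gmat f m a' b' c' =
      Gmat f m (a * a') (a * b' + b * a' + m * (b * b'))
        (c * a' + m * (c * b') + a * c' + m * (b * c') + (f * m) * (c * c')) := by
  unfold Gmat
  rw [Matrix.submatrix_mul_equiv, GmatAux_mul]

lemma Gmat_add (f m : ℕ) (a b c a' b' c' : ℝ) :
    Gmat f m a b c + Gmat f m a' b' c' = Gmat f m (a + a') (b + b') (c + c') := by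
  have h : GmatAux f m a b c + GmatAux f m a' b' c' =
      GmatAux f m (a + a') (b + b') (c + c') := by
    unfold GmatAux
    simp only [Matrix.kronecker_add, Matrix.kronecker_smul, smul_add, smul_smul]
    module
  unfold Gmat
  ext i j
  simp [← h, Matrix.add_apply]

lemma Gmat_smul (f m : ℕ) (r a b c : ℝ) :
    r • Gmat f m a b c = Gmat f m (r * a) (r * b) (r * c) := by
  have h : r • GmatAux f m a b c = GmatAux f m (r * a) (r * b) (r * c) := by
    unfold GmatAux
    simp only [Matrix.kronecker_add, Matrix.kronecker_smul, smul_add, smul_smul]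
  unfold Gmat
  ext i j
  simp [← h, Matrix.smul_apply]

lemma Gmat_one (f m : ℕ) : Gmat f m 1 0 0 = 1 := by
  unfold Gmat GmatAux
  simp [Matrix.one_kronecker_one, Matrix.submatrix_one_equiv]

lemma Gmat_zero (f m : ℕ) : Gmat f m 0 0 0 = 0 := by
  unfold Gmat GmatAux
  simp

lemma Gmat_congr (f m : ℕ) {a b c a' b' c' : ℝ} (h1 : a = a') (h2 : b = b')
    (h3 : c = c') : Gmat f m a b c = Gmat f m a' b' c' := by rw [h1, h2, h3]

lemma trace_Gmat (f m : ℕ) (a b c : ℝ) :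
    trace (Gmat f m a b c) = (f : ℝ) * m * (a + b + c) := by
  unfold Gmat GmatAux
  rw [trace_submatrix_equiv']
  simp [trace_kronecker, trace_onesMat, trace_smul, trace_add, Matrix.trace_one]
  ring

lemma onesMat_eq_Gmat (f m : ℕ) : onesMat (Fin (f * m)) = Gmat f m 0 0 1 := by
  unfold Gmat GmatAux onesMat
  ext i j
  simp [Matrix.submatrix_apply, Matrix.kroneckerMap_apply]

lemma Nmat_eq_Gmat (f m : ℕ) (b1 b : ℝ) : Nmat f m b1 b = Gmat f m b1 b 0 := by
  unfold Nmat Gmat GmatAux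
  simp

def Qz (f m : ℕ) : Matrix (Fin (f * m)) (Fin (f * m)) ℝ :=
  Gmat f m 0 0 (((f : ℝ) * m)⁻¹)
def Qo (f m : ℕ) : Matrix (Fin (f * m)) (Fin (f * m)) ℝ :=
  Gmat f m 0 ((m : ℝ)⁻¹) (-((f : ℝ) * m)⁻¹)
def Qt (f m : ℕ) : Matrix (Fin (f * m)) (Fin (f * m)) ℝ :=
  Gmat f m 1 (-(m : ℝ)⁻¹) 0

section Qlemmas
variable {f m : ℕ} (hf : (f : ℝ) ≠ 0) (hm : (m : ℝ) ≠ 0)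
include hf hm

lemma Qz_mul_Qz : Qz f m * Qz f m = Qz f m := by
  unfold Qz; rw [Gmat_mul]; apply Gmat_congr <;> field_simp <;> ring
lemma Qo_mul_Qo : Qo f m * Qo f m = Qo f m := by
  unfold Qo; rw [Gmat_mul]; apply Gmat_congr <;> field_simp <;> ring
lemma Qt_mul_Qt : Qt f m * Qt f m = Qt f m := by
  unfold Qt; rw [Gmat_mul]; apply Gmat_congr <;> field_simp <;> ring
lemma Qz_mul_Qo : Qz f m * Qo f m = 0 := by
  unfold Qz Qo; rw [Gmat_mul, ← Gmat_zero f m]; apply Gmat_congr <;> field_simp <;> ring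
lemma Qo_mul_Qz : Qo f m * Qz f m = 0 := by
  unfold Qz Qo; rw [Gmat_mul, ← Gmat_zero f m]; apply Gmat_congr <;> field_simp <;> ring
lemma Qz_mul_Qt : Qz f m * Qt f m = 0 := by
  unfold Qz Qt; rw [Gmat_mul, ← Gmat_zero f m]; apply Gmat_congr <;> field_simp <;> ring
lemma Qt_mul_Qz : Qt f m * Qz f m = 0 := by
  unfold Qz Qt; rw [Gmat_mul, ← Gmat_zero f m]; apply Gmat_congr <;> field_simp <;> ring
lemma Qo_mul_Qt : Qo f m * Qt f m = 0 := by
  unfold Qo Qt; rw [Gmat_mul, ← Gmat_zero f m]; apply Gmat_congr <;> field_simp <;> ring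
lemma Qt_mul_Qo : Qt f m * Qo f m = 0 := by
  unfold Qo Qt; rw [Gmat_mul, ← Gmat_zero f m]; apply Gmat_congr <;> field_simp <;> ring

lemma Q_sum : Qz f m + Qo f m + Qt f m = 1 := by
  unfold Qz Qo Qt
  rw [Gmat_add, Gmat_add, ← Gmat_one f m]
  apply Gmat_congr <;> ring

lemma Tmat_eq : Tmat (f * m) = Qo f m + Qt f m := by
  unfold Tmat Qo Qt
  rw [onesMat_eq_Gmat, Gmat_smul, Gmat_add, sub_eq_iff_eq_add, Gmat_add, ← Gmat_one f m]
  apply Gmat_congr <;> push_cast <;> ring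

lemma Nmat_eq (b1 b : ℝ) :
    Nmat f m b1 b = ((m : ℝ) * b + b1) • Qz f m + ((m : ℝ) * b + b1) • Qo f m
      + b1 • Qt f m := by
  unfold Qz Qo Qt
  rw [Nmat_eq_Gmat, Gmat_smul, Gmat_smul, Gmat_smul, Gmat_add, Gmat_add]
  apply Gmat_congr <;> field_simp <;> ring

end Qlemmas

section Mix
variable {f m P : ℕ} (hf : (f : ℝ) ≠ 0) (hm : (m : ℝ) ≠ 0)

def mixM (f m : ℕ) (X0 X1 X2 : Matrix (Fin P) (Fin P) ℝ) :
    Matrix (Fin (f * m) × Fin P) (Fin (f * m) × Fin P) ℝ :=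
  Qz f m ⊗ₖ X0 + Qo f m ⊗ₖ X1 + Qt f m ⊗ₖ X2

include hf hm

lemma mixM_mul (X0 X1 X2 Y0 Y1 Y2 : Matrix (Fin P) (Fin P) ℝ) :
    mixM f m X0 X1 X2 * mixM f m Y0 Y1 Y2 =
      mixM f m (X0 * Y0) (X1 * Y1) (X2 * Y2) := by
  unfold mixM
  simp only [Matrix.add_mul, Matrix.mul_add, ← mul_kronecker_mul,
    Qz_mul_Qz hf hm, Qo_mul_Qo hf hm, Qt_mul_Qt hf hm,
    Qz_mul_Qo hf hm, Qo_mul_Qz hf hm, Qz_mul_Qt hf hm,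
    Qt_mul_Qz hf hm, Qo_mul_Qt hf hm, Qt_mul_Qo hf hm,
    Matrix.zero_kronecker, add_zero, zero_add]

lemma mixM_one : mixM f m (1 : Matrix (Fin P) (Fin P) ℝ) 1 1 = 1 := by
  unfold mixM
  rw [← Matrix.add_kronecker, ← Matrix.add_kronecker, Q_sum hf hm,
    Matrix.one_kronecker_one]

lemma one_kronecker_eq_mixM (L : Matrix (Fin P) (Fin P) ℝ) :
    (1 : Matrix (Fin (f * m)) (Fin (f * m)) ℝ) ⊗ₖ L = mixM f m L L L := by
  rw [← Q_sum hf hm]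
  unfold mixM
  simp [Matrix.add_kronecker]

omit hf hm

lemma trace_mixM (X0 X1 X2 : Matrix (Fin P) (Fin P) ℝ) (hf : (f:ℝ) ≠ 0) (hm : (m:ℝ) ≠ 0) :
    trace (mixM f m X0 X1 X2) =
      trace X0 + ((f : ℝ) - 1) * trace X1 + (f : ℝ) * ((m : ℝ) - 1) * trace X2 := by
  unfold mixM Qz Qo Qt
  rw [trace_add, trace_add, trace_kronecker, trace_kronecker, trace_kronecker,
    trace_Gmat, trace_Gmat, trace_Gmat]
  have h1 : (f : ℝ) * m * (0 + 0 + ((f:ℝ)*m)⁻¹) = 1 := by field_simp; ring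
  have h2 : (f : ℝ) * m * (0 + (m:ℝ)⁻¹ + -((f:ℝ)*m)⁻¹) = (f:ℝ) - 1 := by
    field_simp; ring
  have h3 : (f : ℝ) * m * (1 + -(m:ℝ)⁻¹ + 0) = (f:ℝ) * ((m:ℝ) - 1) := by
    field_simp; ring
  rw [h1, h2, h3]
  ring

end Mix

lemma Cmat_transpose_mul (K : ℕ) (hK : (K : ℝ) ≠ 0) :
    (Cmat K)ᵀ * Cmat K = (K : ℝ) • Tmat K := by
  ext j j'
  rw [Matrix.mul_apply]
  set g : Fin K × Fin K → ℝ := fun p =>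
    ((if j = p.1 then (1:ℝ) else 0) - (if j = p.2 then 1 else 0)) *
    ((if j' = p.1 then (1:ℝ) else 0) - (if j' = p.2 then 1 else 0)) with hg
  have hterm : ∀ q : {p : Fin K × Fin K // p.1 < p.2},
      (Cmat K)ᵀ j q * Cmat K q j' = g q.1 := by
    intro q; simp [Cmat, Matrix.transpose_apply, hg]
  rw [Finset.sum_congr rfl (fun q _ => hterm q)]
  have hsub : (∑ q : {p : Fin K × Fin K // p.1 < p.2}, g q.1) =
      ∑ p ∈ Finset.univ.filter (fun p : Fin K × Fin K => p.1 < p.2), g p := by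
    rw [← Finset.sum_subtype (Finset.univ.filter (fun p : Fin K × Fin K => p.1 < p.2))
      (fun p => by simp) g]
  have hswap : (∑ p ∈ Finset.univ.filter (fun p : Fin K × Fin K => p.2 < p.1), g p) =
      ∑ p ∈ Finset.univ.filter (fun p : Fin K × Fin K => p.1 < p.2), g p := by
    apply Finset.sum_nbij' (fun p => Prod.swap p) (fun p => Prod.swap p)
    · intro p hp; simp only [Finset.mem_filter, Finset.mem_univ, true_and] at hp ⊢
      exact hp
    · intro p hp; simp only [Finset.mem_filter, Finset.mem_univ, true_and] at hp ⊢
      exact hp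
    · intro p _; simp
    · intro p _; simp
    · intro p _; simp only [hg, Prod.fst_swap, Prod.snd_swap]; ring
  have hdiag : (∑ p ∈ Finset.univ.filter (fun p : Fin K × Fin K => p.1 = p.2), g p) = 0 := by
    apply Finset.sum_eq_zero
    intro p hp
    simp only [Finset.mem_filter, Finset.mem_univ, true_and] at hp
    simp [hg, hp]
  have huniv : (∑ p : Fin K × Fin K, g p) =
      2 * ((K : ℝ) * (if j = j' then 1 else 0) - 1) := by
    simp only [hg, Fintype.sum_prod_type, sub_mul, mul_sub, Finset.sum_sub_distrib,
      Finset.sum_ite_eq, Finset.mem_univ, if_true, Finset.sum_const, Finset.card_univ,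
      Fintype.card_fin, nsmul_eq_mul, ite_mul, mul_ite, one_mul, mul_one, mul_zero, zero_mul]
    have e1 : ∀ x : Fin K, (∑ x1 : Fin K,
          if j' = x then (if j = x then (1:ℝ) else 0) - if j = x1 then 1 else 0 else 0)
        = if j' = x then (K:ℝ) * (if j = x then 1 else 0) - 1 else 0 := by
      intro x
      by_cases h : j' = x
      · simp [h, Finset.sum_sub_distrib, Finset.sum_const, Finset.card_univ, mul_comm]
      · simp [h]
    rw [Finset.sum_congr rfl (fun x _ => e1 x), Finset.sum_ite_eq]
    by_cases h : j = j' <;>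
      simp [h, Finset.sum_const, Finset.card_univ] <;> ring
  have hsplit1 := Finset.sum_filter_add_sum_filter_not Finset.univ
    (fun p : Fin K × Fin K => p.1 < p.2) g
  have hsplit2 := Finset.sum_filter_add_sum_filter_not
    (Finset.univ.filter (fun p : Fin K × Fin K => ¬ p.1 < p.2))
    (fun p : Fin K × Fin K => p.1 = p.2) g
  have h2 : (∑ p ∈ (Finset.univ.filter (fun p : Fin K × Fin K => ¬ p.1 < p.2)).filter
      (fun p => p.1 = p.2), g p) = 0 := by
    apply Finset.sum_eq_zero
    intro p hp
    rw [Finset.mem_filter, Finset.mem_filter] at hp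
    simp [hg, hp.2, sub_self]
  have h3 : (Finset.univ.filter (fun p : Fin K × Fin K => ¬ p.1 < p.2)).filter
      (fun p => ¬ p.1 = p.2) = Finset.univ.filter (fun p : Fin K × Fin K => p.2 < p.1) := by
    ext p
    simp only [Finset.mem_filter, Finset.mem_univ, true_and, Fin.lt_def, Fin.ext_iff]
    omega
  rw [h2, h3, hswap, zero_add] at hsplit2
  rw [← hsplit2] at hsplit1
  rw [huniv] at hsplit1
  rw [hsub]
  have hval : (∑ p ∈ Finset.univ.filter (fun p : Fin K × Fin K => p.1 < p.2), g p)
      = (K : ℝ) * (if j = j' then 1 else 0) - 1 := by linarith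
  rw [hval]
  simp only [Tmat, Matrix.smul_apply, Matrix.sub_apply, Matrix.one_apply, onesMat,
    Matrix.smul_apply, Matrix.of_apply, smul_eq_mul]
  field_simp

section InvId
variable {P : ℕ}

lemma posDef_smul {c : ℝ} (hc : 0 < c) {V : Matrix (Fin P) (Fin P) ℝ}
    (hV : V.PosDef) : (c • V).PosDef := by
  constructor
  · unfold Matrix.IsHermitian
    rw [Matrix.conjTranspose_smul]
    simp only [hV.1.eq]
    norm_num
  · intro x hx
    have h := hV.2 hx
    have h' := smul_pos hc h
    simp only [smul_eq_mul, Finsupp.mul_sum] at h'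
    simp only [Matrix.smul_apply, smul_eq_mul]
    refine lt_of_lt_of_eq h' ?_
    apply Finsupp.sum_congr; intro i _
    apply Finsupp.sum_congr; intro j _
    ring

lemma posDef_isUnit_det {A : Matrix (Fin P) (Fin P) ℝ} (hA : A.PosDef) :
    IsUnit A.det := by
  exact isUnit_iff_ne_zero.mpr hA.det_pos.ne'

lemma inv_add_inv_eq {A W : Matrix (Fin P) (Fin P) ℝ}
    (hA : IsUnit A.det) (hW : IsUnit W.det) (h : IsUnit (A⁻¹ + W).det) :
    (A + W⁻¹)⁻¹ = W - W * (A⁻¹ + W)⁻¹ * W := by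
  apply Matrix.inv_eq_right_inv
  have h1 : W⁻¹ * W = 1 := Matrix.nonsing_inv_mul _ hW
  have h2 : (A⁻¹ + W) * (A⁻¹ + W)⁻¹ = 1 := Matrix.mul_nonsing_inv _ h
  have h3 : A * A⁻¹ = 1 := Matrix.mul_nonsing_inv _ hA
  have key : (A * W + 1) * ((A⁻¹ + W)⁻¹ * W) = A * W := by
    have : A * W + 1 = A * (A⁻¹ + W) := by
      rw [Matrix.mul_add, h3]; abel
    rw [this, Matrix.mul_assoc A, ← Matrix.mul_assoc (A⁻¹ + W), h2,
      Matrix.one_mul]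
  calc (A + W⁻¹) * (W - W * (A⁻¹ + W)⁻¹ * W)
      = A * W + W⁻¹ * W - (A * W + W⁻¹ * W) * ((A⁻¹ + W)⁻¹ * W) := by
        noncomm_ring
    _ = A * W + 1 - (A * W + 1) * ((A⁻¹ + W)⁻¹ * W) := by rw [h1]
    _ = A * W + 1 - A * W := by rw [key]
    _ = 1 := by abel

end InvId

section TraceB
variable {P : ℕ}

lemma traceB_eq {R W L M : Matrix (Fin P) (Fin P) ℝ}
    (hR : R.PosDef) (hW : W.PosDef) (hM : M.PosDef) :
    trace (((M⁻¹ + R)⁻¹ + W⁻¹)⁻¹ * L)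
      = trace (W * L) - trace ((R + W)⁻¹ * (W * L * W))
        + trace ((M + (R + W)⁻¹)⁻¹ * ((R + W)⁻¹ * W * L * W * (R + W)⁻¹)) := by
  set S := R + W with hSdef
  have hS : S.PosDef := hR.add hW
  have hMR : (M⁻¹ + R).PosDef := hM.inv.add hR
  have hMS : (M⁻¹ + S).PosDef := hM.inv.add hS
  have hMSi : (M + S⁻¹).PosDef := hM.add hS.inv
  have hAinv : ((M⁻¹ + R)⁻¹)⁻¹ = M⁻¹ + R :=
    Matrix.nonsing_inv_nonsing_inv _ (posDef_isUnit_det hMR)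
  have hSinv : (S⁻¹)⁻¹ = S := Matrix.nonsing_inv_nonsing_inv _ (posDef_isUnit_det hS)
  have hMinv : (M⁻¹)⁻¹ = M := Matrix.nonsing_inv_nonsing_inv _ (posDef_isUnit_det hM)
  have e1 : ((M⁻¹ + R)⁻¹ + W⁻¹)⁻¹ = W - W * (M⁻¹ + S)⁻¹ * W := by
    have h := inv_add_inv_eq (posDef_isUnit_det hMR.inv) (posDef_isUnit_det hW)
      (by rw [hAinv, add_assoc, ← hSdef]; exact posDef_isUnit_det hMS)
    rw [hAinv, add_assoc, ← hSdef] at h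
    exact h
  have e2 : (M⁻¹ + S)⁻¹ = S⁻¹ - S⁻¹ * (M + S⁻¹)⁻¹ * S⁻¹ := by
    have h := inv_add_inv_eq (A := M⁻¹) (W := S⁻¹)
      (posDef_isUnit_det hM.inv) (posDef_isUnit_det hS.inv)
      (by rw [hMinv]; exact posDef_isUnit_det hMSi)
    rw [hSinv, hMinv] at h
    exact h
  rw [e1, e2]
  set Y := (M + S⁻¹)⁻¹ with hY
  have expand : (W - W * (S⁻¹ - S⁻¹ * Y * S⁻¹) * W) * L
      = W * L - W * S⁻¹ * W * L + W * (S⁻¹ * Y * S⁻¹) * W * L := by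
    noncomm_ring
  rw [expand, trace_add, trace_sub]
  have t2 : trace (W * S⁻¹ * W * L) = trace (S⁻¹ * (W * L * W)) := by
    have h' : W * S⁻¹ * W * L = (W * S⁻¹) * (W * L) := by
      simp only [Matrix.mul_assoc]
    have h'' : (W * L) * (W * S⁻¹) = (W * L * W) * S⁻¹ := by
      simp only [Matrix.mul_assoc]
    rw [h', trace_mul_comm, h'', trace_mul_comm]
  have t3 : trace (W * (S⁻¹ * Y * S⁻¹) * W * L) = trace (Y * (S⁻¹ * W * L * W * S⁻¹)) := by
    have : W * (S⁻¹ * Y * S⁻¹) * W * L = (W * S⁻¹) * (Y * (S⁻¹ * (W * L))) := by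
      simp only [Matrix.mul_assoc]
    rw [this, trace_mul_comm]
    simp only [Matrix.mul_assoc]
  rw [t2, t3]

end TraceB

section Sigma
variable {f m P : ℕ}

lemma mixM_add (X0 X1 X2 Y0 Y1 Y2 : Matrix (Fin P) (Fin P) ℝ) :
    mixM f m X0 X1 X2 + mixM f m Y0 Y1 Y2 =
      mixM f m (X0 + Y0) (X1 + Y1) (X2 + Y2) := by
  unfold mixM
  simp only [Matrix.kronecker_add]
  abel

lemma mixM_smul (r : ℝ) (X0 X1 X2 : Matrix (Fin P) (Fin P) ℝ) :
    r • mixM f m X0 X1 X2 = mixM f m (r • X0) (r • X1) (r • X2) := by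
  unfold mixM
  simp only [Matrix.kronecker_smul, smul_add]

variable (hf : (f : ℝ) ≠ 0) (hm : (m : ℝ) ≠ 0)
  {R V : Matrix (Fin P) (Fin P) ℝ} (hR : R.PosDef) (hV : V.PosDef)
  {b1 b : ℝ} (hb1 : 0 < b1) (hc2 : 0 < (m : ℝ) * b + b1)
  {M : Matrix (Fin P) (Fin P) ℝ} (hM : M.PosDef)

include hf hm hR hV hb1 hc2 hM

lemma sigma_eq :
    SigmaMat f m P R V b1 b M =
      mixM f m (((m : ℝ) * b + b1) • V)
        (((M⁻¹ + R)⁻¹ + ((((m : ℝ) * b + b1)) • V)⁻¹)⁻¹)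
        (((M⁻¹ + R)⁻¹ + (b1 • V)⁻¹)⁻¹) := by
  have hW1 : (b1 • V).PosDef := posDef_smul hb1 hV
  have hW2 : ((((m : ℝ) * b + b1)) • V).PosDef := posDef_smul hc2 hV
  have hMR : (M⁻¹ + R).PosDef := hM.inv.add hR
  have hB2 : ((M⁻¹ + R)⁻¹ + ((((m : ℝ) * b + b1)) • V)⁻¹).PosDef := hMR.inv.add hW2.inv
  have hB1 : ((M⁻¹ + R)⁻¹ + (b1 • V)⁻¹).PosDef := hMR.inv.add hW1.inv
  unfold SigmaMat
  have hNV : Nmat f m b1 b ⊗ₖ V =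
      mixM f m ((((m : ℝ) * b + b1)) • V) ((((m : ℝ) * b + b1)) • V) (b1 • V) := by
    rw [Nmat_eq hf hm]
    unfold mixM
    simp only [Matrix.add_kronecker, Matrix.smul_kronecker, Matrix.kronecker_smul]
  have hNVinv : (Nmat f m b1 b ⊗ₖ V)⁻¹ =
      mixM f m (((((m : ℝ) * b + b1)) • V)⁻¹) (((((m : ℝ) * b + b1)) • V)⁻¹)
        ((b1 • V)⁻¹) := by
    rw [hNV]
    apply Matrix.inv_eq_right_inv
    rw [mixM_mul hf hm, Matrix.mul_nonsing_inv _ (posDef_isUnit_det hW2),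
      Matrix.mul_nonsing_inv _ (posDef_isUnit_det hW1), mixM_one hf hm]
  have hT : Tmat (f * m) ⊗ₖ (M⁻¹ + R)⁻¹ =
      mixM f m 0 ((M⁻¹ + R)⁻¹) ((M⁻¹ + R)⁻¹) := by
    rw [Tmat_eq hf hm]
    unfold mixM
    simp only [Matrix.add_kronecker, Matrix.kronecker_zero, zero_add]
  rw [hNVinv, hT, mixM_add]
  apply Matrix.inv_eq_right_inv
  rw [mixM_mul hf hm, zero_add,
    Matrix.nonsing_inv_mul _ (posDef_isUnit_det hW2),
    Matrix.mul_nonsing_inv _ (posDef_isUnit_det hB2),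
    Matrix.mul_nonsing_inv _ (posDef_isUnit_det hB1), mixM_one hf hm]

lemma phiAlpha_eq (L : Matrix (Fin P) (Fin P) ℝ) :
    PhiAlpha f m P R V L b1 b M =
      trace ((((m : ℝ) * b + b1) • V) * L)
        + ((f : ℝ) - 1) * trace ((((M⁻¹ + R)⁻¹ + ((((m : ℝ) * b + b1)) • V)⁻¹)⁻¹) * L)
        + (f : ℝ) * ((m : ℝ) - 1) * trace ((((M⁻¹ + R)⁻¹ + (b1 • V)⁻¹)⁻¹) * L) := by
  unfold PhiAlpha
  rw [sigma_eq hf hm hR hV hb1 hc2 hM, one_kronecker_eq_mixM hf hm,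
    mixM_mul hf hm, trace_mixM _ _ _ hf hm]

lemma phiTheta_eq (L : Matrix (Fin P) (Fin P) ℝ) :
    PhiTheta f m P R V L b1 b M =
      ((f : ℝ) * m) * (((f : ℝ) - 1)
          * trace ((((M⁻¹ + R)⁻¹ + ((((m : ℝ) * b + b1)) • V)⁻¹)⁻¹) * L)
        + (f : ℝ) * ((m : ℝ) - 1) * trace ((((M⁻¹ + R)⁻¹ + (b1 • V)⁻¹)⁻¹) * L)) := by
  unfold PhiTheta
  set Sg := SigmaMat f m P R V b1 b M with hSg
  have h1 : (Cmat (f * m))ᵀ ⊗ₖ (1 : Matrix (Fin P) (Fin P) ℝ)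
      * ((1 : Matrix {p : Fin (f * m) × Fin (f * m) // p.1 < p.2}
          {p : Fin (f * m) × Fin (f * m) // p.1 < p.2} ℝ) ⊗ₖ L)
      = (Cmat (f * m))ᵀ ⊗ₖ L := by
    rw [← mul_kronecker_mul, Matrix.mul_one, Matrix.one_mul]
  have h2 : ((Cmat (f * m))ᵀ ⊗ₖ L) * (Cmat (f * m) ⊗ₖ (1 : Matrix (Fin P) (Fin P) ℝ))
      = ((Cmat (f * m))ᵀ * Cmat (f * m)) ⊗ₖ (L * 1) := by
    rw [← mul_kronecker_mul]
  have hKne : ((f * m : ℕ) : ℝ) ≠ 0 := by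
    push_cast
    exact mul_ne_zero hf hm
  have h3 : ((Cmat (f * m))ᵀ * Cmat (f * m)) ⊗ₖ (L * 1)
      = mixM f m 0 ((((f * m : ℕ)) : ℝ) • L) ((((f * m : ℕ)) : ℝ) • L) := by
    rw [Cmat_transpose_mul _ hKne, Matrix.mul_one, Tmat_eq hf hm,
      Matrix.smul_kronecker, Matrix.add_kronecker]
    have : Qo f m ⊗ₖ L + Qt f m ⊗ₖ L = mixM f m 0 L L := by
      unfold mixM
      simp only [Matrix.kronecker_zero, zero_add]
    rw [this, mixM_smul]
    simp
  calc trace ((Cmat (f * m) ⊗ₖ (1 : Matrix (Fin P) (Fin P) ℝ)) * Sg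
        * ((Cmat (f * m))ᵀ ⊗ₖ (1 : Matrix (Fin P) (Fin P) ℝ))
        * ((1 : Matrix {p : Fin (f * m) × Fin (f * m) // p.1 < p.2}
          {p : Fin (f * m) × Fin (f * m) // p.1 < p.2} ℝ) ⊗ₖ L))
      = trace ((Cmat (f * m) ⊗ₖ (1 : Matrix (Fin P) (Fin P) ℝ)) * (Sg
        * (((Cmat (f * m))ᵀ ⊗ₖ (1 : Matrix (Fin P) (Fin P) ℝ))
        * ((1 : Matrix {p : Fin (f * m) × Fin (f * m) // p.1 < p.2}
          {p : Fin (f * m) × Fin (f * m) // p.1 < p.2} ℝ) ⊗ₖ L)))) := by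
        simp only [Matrix.mul_assoc]
    _ = trace ((Sg * ((Cmat (f * m))ᵀ ⊗ₖ L)) * (Cmat (f * m) ⊗ₖ (1 : Matrix (Fin P) (Fin P) ℝ))) := by
        rw [h1, trace_mul_comm]
    _ = trace (Sg * (mixM f m 0 ((((f * m : ℕ)) : ℝ) • L) ((((f * m : ℕ)) : ℝ) • L))) := by
        rw [Matrix.mul_assoc, h2, h3]
    _ = ((f : ℝ) * m) * (((f : ℝ) - 1)
          * trace ((((M⁻¹ + R)⁻¹ + ((((m : ℝ) * b + b1)) • V)⁻¹)⁻¹) * L)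
        + (f : ℝ) * ((m : ℝ) - 1) * trace ((((M⁻¹ + R)⁻¹ + (b1 • V)⁻¹)⁻¹) * L)) := by
        rw [hSg, sigma_eq hf hm hR hV hb1 hc2 hM, mixM_mul hf hm, trace_mixM _ _ _ hf hm]
        simp only [Matrix.mul_zero, trace_zero, Matrix.mul_smul, trace_smul, smul_eq_mul]
        push_cast
        ring

end Sigma


theorem stmt17 (f m P : ℕ) (hf : 1 ≤ f) (hm : 1 ≤ m) (hP : 1 ≤ P)
    (hK : 2 ≤ f * m)
    (R V : Matrix (Fin P) (Fin P) ℝ) (hR : R.PosDef) (hV : V.PosDef)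
    (b1 b : ℝ) (hb1 : 0 < b1) (hb : 0 ≤ b)
    (ℓ : Fin P → ℝ) (hℓ : ∀ i, 0 ≤ ℓ i)
    (L : Matrix (Fin P) (Fin P) ℝ) (hL : L = Matrix.diagonal ℓ)
    (M1 M2 : Matrix (Fin P) (Fin P) ℝ) (hM1 : M1.PosDef) (hM2 : M2.PosDef) :
    (PhiAlpha f m P R V L b1 b M1 ≤ PhiAlpha f m P R V L b1 b M2 ↔
      PhiTheta f m P R V L b1 b M1 ≤ PhiTheta f m P R V L b1 b M2) ∧
    (PhiTheta f m P R V L b1 b M1 ≤ PhiTheta f m P R V L b1 b M2 ↔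
      PhiCBRC f m P R V L b1 b M1 ≤ PhiCBRC f m P R V L b1 b M2) := by
  have hf0 : (f : ℝ) ≠ 0 := Nat.cast_ne_zero.mpr (by omega)
  have hm0 : (m : ℝ) ≠ 0 := Nat.cast_ne_zero.mpr (by omega)
  have hc2 : 0 < (m : ℝ) * b + b1 :=
    add_pos_of_nonneg_of_pos (mul_nonneg (by positivity) hb) hb1
  have hW1 : (b1 • V).PosDef := posDef_smul hb1 hV
  have hW2 : ((((m : ℝ) * b + b1)) • V).PosDef := posDef_smul hc2 hV
  set cA : ℝ := trace (((((m : ℝ) * b + b1)) • V) * L)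
    + ((f : ℝ) - 1) * (trace (((((m : ℝ) * b + b1)) • V) * L)
        - trace ((R + (((m : ℝ) * b + b1)) • V)⁻¹
            * (((((m : ℝ) * b + b1)) • V) * L * ((((m : ℝ) * b + b1)) • V))))
    + (f : ℝ) * ((m : ℝ) - 1) * (trace ((b1 • V) * L)
        - trace ((R + b1 • V)⁻¹ * ((b1 • V) * L * (b1 • V)))) with hcA
  set cT : ℝ := ((f : ℝ) * m) * (((f : ℝ) - 1) * (trace (((((m : ℝ) * b + b1)) • V) * L)
        - trace ((R + (((m : ℝ) * b + b1)) • V)⁻¹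
            * (((((m : ℝ) * b + b1)) • V) * L * ((((m : ℝ) * b + b1)) • V))))
    + (f : ℝ) * ((m : ℝ) - 1) * (trace ((b1 • V) * L)
        - trace ((R + b1 • V)⁻¹ * ((b1 • V) * L * (b1 • V))))) with hcT
  have eA : ∀ M : Matrix (Fin P) (Fin P) ℝ, M.PosDef →
      PhiAlpha f m P R V L b1 b M = cA + PhiCBRC f m P R V L b1 b M := by
    intro M hM
    rw [phiAlpha_eq hf0 hm0 hR hV hb1 hc2 hM,
      traceB_eq hR hW2 hM, traceB_eq hR hW1 hM]
    unfold PhiCBRC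
    rw [hcA]
    push_cast
    ring
  have eT : ∀ M : Matrix (Fin P) (Fin P) ℝ, M.PosDef →
      PhiTheta f m P R V L b1 b M = cT + ((f : ℝ) * m) * PhiCBRC f m P R V L b1 b M := by
    intro M hM
    rw [phiTheta_eq hf0 hm0 hR hV hb1 hc2 hM,
      traceB_eq hR hW2 hM, traceB_eq hR hW1 hM]
    unfold PhiCBRC
    rw [hcT]
    push_cast
    ring
  have hKpos : (0 : ℝ) < (f : ℝ) * m := by
    have : (0 : ℝ) < f := by positivity
    have : (0 : ℝ) < m := by positivity
    positivity
  have hiffA : PhiAlpha f m P R V L b1 b M1 ≤ PhiAlpha f m P R V L b1 b M2 ↔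
      PhiCBRC f m P R V L b1 b M1 ≤ PhiCBRC f m P R V L b1 b M2 := by
    rw [eA M1 hM1, eA M2 hM2]
    exact add_le_add_iff_left cA
  have hiffT : PhiTheta f m P R V L b1 b M1 ≤ PhiTheta f m P R V L b1 b M2 ↔
      PhiCBRC f m P R V L b1 b M1 ≤ PhiCBRC f m P R V L b1 b M2 := by
    rw [eT M1 hM1, eT M2 hM2, add_le_add_iff_left cT]
    exact mul_le_mul_iff_right₀ hKpos
  exact ⟨hiffA.trans hiffT.symm, hiffT⟩
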